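/- arXiv:1207.5198 — 9 statements merged into one kernel-verified Lean document; each statement's English description precedes it below -/
import Mathlib

section
/- Let n ≥ 1 and x be natural numbers with x ≤ n, let a, b, α, β₀ be real numbers with 0 ≤ a ≤ b ≤ β₀, β₀ > 0, α ≥ 0, and assume it is not the case that both a = b and x = n. Define a sequence (α_m) by α₀ = α and α_m = (a(α_{m−1} + β₀ + n) + (β₀ − b)(α_{m−1} + x)) / (β₀ + n − x) for m ≥ 1 (this is the solution of (α_m − a)/(α_m + β₀ − b) = (α_{m−1} + x)/(α_{m−1} + β₀ + n)). Then the sequence of Bayes estimates (α_m + x)/(α_m + β₀ + n) converges, as m → ∞, to (x + a)/(n + b). -/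
/-! The update `αₘ ↦ αₘ₊₁` is affine with slope `(a + β₀ - b)/(β₀ + n - x) ∈ [0, 1)`, so the
iterates converge geometrically to its fixed point `L`, whatever the starting prior. Clearing
denominators, the fixed-point equation is exactly `(L + x)(n + b) = (x + a)(L + β₀ + n)`, i.e. the
Bayes estimate at `L` is `(x + a)/(n + b)`; continuity of the estimate in `α` finishes the proof. -/

open Filter Topology

theorem tendsto_of_affine_recurrence {𝕜 E : Type*} [NormedField 𝕜] [NormedAddCommGroup E]
    [NormedSpace 𝕜 E] {c : 𝕜} {d L : E} (hc : ‖c‖ < 1) (hL : c • L + d = L) {u : ℕ → E}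
    (hu : ∀ m, u (m + 1) = c • u m + d) : Tendsto u atTop (𝓝 L) := by
  have hdist : ∀ m, u m - L = c ^ m • (u 0 - L) := by
    intro m
    induction m with
    | zero => simp
    | succ m ih =>
      rw [hu, pow_succ', mul_smul, ← ih, smul_sub]
      conv_lhs => rw [← hL]
      abel
  have hzero : Tendsto (fun m => c ^ m • (u 0 - L)) atTop (𝓝 0) := by
    simpa using (tendsto_pow_atTop_nhds_zero_of_norm_lt_one hc).smul_const (u 0 - L)
  exact tendsto_sub_nhds_zero_iff.mp (hzero.congr fun m => (hdist m).symm)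

namespace IterativeBayes

/-- The solution `α'` of `(α' - a)/(α' + β₀ - b) = (α + x)/(α + β₀ + n)`. -/
noncomputable def update (n x a b β₀ α : ℝ) : ℝ :=
  (a * (α + β₀ + n) + (β₀ - b) * (α + x)) / (β₀ + n - x)

/-- `d / (1 - c)` for the affine form `update α = c * α + d` of `update_eq_affine`. -/
noncomputable def fixedPoint (n x a b β₀ : ℝ) : ℝ :=
  (a * (β₀ + n) + (β₀ - b) * x) / (n - x + b - a)

variable {n x a b β₀ : ℝ}

theorem update_eq_affine (α : ℝ) :
    update n x a b β₀ α =
      (a + β₀ - b) / (β₀ + n - x) * α + (a * (β₀ + n) + (β₀ - b) * x) / (β₀ + n - x) := by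
  unfold update
  ring

theorem abs_update_slope_lt_one (ha : 0 ≤ a) (hbβ : b ≤ β₀) (hE : 0 < n - x + b - a) :
    |(a + β₀ - b) / (β₀ + n - x)| < 1 := by
  rw [abs_of_nonneg (div_nonneg (by linarith) (by linarith)), div_lt_one (by linarith)]
  linarith

theorem update_fixedPoint (hD : β₀ + n - x ≠ 0) (hE : n - x + b - a ≠ 0) :
    update n x a b β₀ (fixedPoint n x a b β₀) = fixedPoint n x a b β₀ := by
  unfold update fixedPoint
  field_simp
  ring

theorem fixedPoint_nonneg (hx₀ : 0 ≤ x) (ha : 0 ≤ a) (hbβ : b ≤ β₀)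
    (hE : 0 < n - x + b - a) : 0 ≤ fixedPoint n x a b β₀ :=
  div_nonneg (add_nonneg (mul_nonneg ha (by linarith)) (mul_nonneg (by linarith) hx₀)) hE.le

theorem estimate_fixedPoint (hx₀ : 0 ≤ x) (ha : 0 ≤ a) (hbβ : b ≤ β₀)
    (hE : 0 < n - x + b - a) :
    (fixedPoint n x a b β₀ + x) / (fixedPoint n x a b β₀ + β₀ + n) = (x + a) / (n + b) := by
  have hL := fixedPoint_nonneg hx₀ ha hbβ hE
  rw [div_eq_div_iff (by linarith) (by linarith)]
  unfold fixedPoint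
  field_simp
  ring

end IterativeBayes

open IterativeBayes

theorem iterative_bayes_binomial_general (n x : ℕ) (hx : x ≤ n)
    (a b β₀ : ℝ) (ha : 0 ≤ a) (hab : a ≤ b) (hbβ : b ≤ β₀)
    (hne : ¬(a = b ∧ x = n))
    (α_seq : ℕ → ℝ)
    (hrec : ∀ m : ℕ, α_seq (m + 1) =
      (a * (α_seq m + β₀ + n) + (β₀ - b) * (α_seq m + x)) / (β₀ + n - x)) :
    Filter.Tendsto (fun m => (α_seq m + x) / (α_seq m + β₀ + n))
      Filter.atTop (nhds (((x : ℝ) + a) / ((n : ℝ) + b))) := by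
  have hxn : (x : ℝ) ≤ n := by exact_mod_cast hx
  have hE : (0 : ℝ) < n - x + b - a := by
    rcases hab.lt_or_eq with hab | rfl
    · linarith
    · have : (x : ℝ) < n := by exact_mod_cast hx.lt_of_ne fun h => hne ⟨rfl, h⟩
      linarith
  have hlim : Tendsto α_seq atTop (𝓝 (fixedPoint n x a b β₀)) := by
    refine tendsto_of_affine_recurrence (c := (a + β₀ - b) / (β₀ + n - x))
      (d := (a * (β₀ + n) + (β₀ - b) * x) / (β₀ + n - x))
      (by simpa only [Real.norm_eq_abs] using abs_update_slope_lt_one ha hbβ hE) ?_ fun m => ?_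
    · rw [smul_eq_mul, ← update_eq_affine, update_fixedPoint (by linarith) hE.ne']
    · rw [hrec, smul_eq_mul, ← update_eq_affine, update]
  have hL := fixedPoint_nonneg (Nat.cast_nonneg x) ha hbβ hE
  rw [← estimate_fixedPoint (Nat.cast_nonneg x) ha hbβ hE]
  exact (hlim.add_const _).div ((hlim.add_const _).add_const _) (by linarith)

/-- Theorem 1 of the paper: iterative Bayes estimation in the binomial model.
Replacing the characteristic `(α − a)/(α + β − b)` of the `Beta(α, β₀)` prior by the
posterior expectation on every iteration, the Bayes estimates converge to `(x + a)/(n + b)`. -/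
theorem iterative_bayes_binomial (n x : ℕ) (hn : 1 ≤ n) (hx : x ≤ n)
    (a b α β₀ : ℝ) (ha : 0 ≤ a) (hab : a ≤ b) (hbβ : b ≤ β₀) (hβ : 0 < β₀) (hα : 0 ≤ α)
    (hne : ¬(a = b ∧ x = n))
    (α_seq : ℕ → ℝ) (h0 : α_seq 0 = α)
    (hrec : ∀ m : ℕ, α_seq (m + 1) =
      (a * (α_seq m + β₀ + n) + (β₀ - b) * (α_seq m + x)) / (β₀ + n - x)) :
    Filter.Tendsto (fun m => (α_seq m + x) / (α_seq m + β₀ + n))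
      Filter.atTop (nhds (((x : ℝ) + a) / ((n : ℝ) + b))) :=
  iterative_bayes_binomial_general n x hx a b β₀ ha hab hbβ hne α_seq hrec
end

section
/- Let α > 0 and s ≥ 0 be real numbers and n ≥ 1 a natural number. Define a sequence (β_m) of reals by an arbitrary β₀ ≥ 0 and β_m = α(β_{m−1} + s)/(α + n) for m ≥ 1. Then the sequence of posterior expectations (β_m + s)/(α + n) converges, as m → ∞, to s/n. -/
/-- Iterative Bayes estimation for the Poisson model (Table 1): with `s = Σ xᵢ` and a
Gamma conjugate prior, replacing the prior expectation `β/α` by the posterior expectation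
`(β + s)/(α + n)` on every iteration, the posterior expectations converge to the MLE `s/n`. -/
theorem iterative_bayes_poisson (α s : ℝ) (hα : 0 < α) (hs : 0 ≤ s)
    (n : ℕ) (hn : 1 ≤ n)
    (β_seq : ℕ → ℝ) (h0 : 0 ≤ β_seq 0)
    (hrec : ∀ m : ℕ, β_seq (m + 1) = α * (β_seq m + s) / (α + n)) :
    Filter.Tendsto (fun m => (β_seq m + s) / (α + n))
      Filter.atTop (nhds (s / n)) := by
  have hn0 : (0:ℝ) < n := by exact_mod_cast Nat.lt_of_lt_of_le Nat.zero_lt_one hn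
  have hsum : (0:ℝ) < α + n := by linarith
  set r : ℝ := α / (α + n) with hr
  set c : ℝ := α * s / n with hc
  have key : ∀ m, β_seq m = c + r ^ m * (β_seq 0 - c) := by
    intro m
    induction m with
    | zero => simp
    | succ k ih =>
      rw [hrec k, ih, hr, hc, pow_succ]
      field_simp
      ring
  have hr0 : 0 ≤ r := div_nonneg hα.le hsum.le
  have hr1 : r < 1 := by
    rw [hr, div_lt_one hsum]; linarith
  have hpow : Filter.Tendsto (fun m => r ^ m) Filter.atTop (nhds 0) :=
    tendsto_pow_atTop_nhds_zero_of_lt_one hr0 hr1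
  have hβ : Filter.Tendsto β_seq Filter.atTop (nhds c) := by
    have := hpow.mul_const (β_seq 0 - c)
    simp only [zero_mul] at this
    have h2 := this.const_add c
    simp only [add_zero] at h2
    exact h2.congr (fun m => (key m).symm)
  have hfin : (c + s) / (α + n) = s / n := by
    rw [hc]; field_simp
  have := (hβ.add_const s).div_const (α + n)
  rwa [hfin] at this
end

section
/- For every natural number x ≥ 1, the polynomial (x+1)a^{x+3} − (x+4)a^{x+2} + (x+4)a − (x+1) in the real variable a has exactly one zero in the open interval (0, 1). -/
/-!
Dividing by `a - 1` leaves `g(a) = (x+1)(1 + a^(x+2)) - 3(a + a² + ⋯ + a^(x+1))`, with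
`g(0) = x+1 > 0` and `g(1) = -(x+1) < 0`. On `(0, 1)` every power `a^k` with `k ≤ x` is at least
`a^x`, so `g'(a) ≤ (x+1)(x+2) a^x (a - 3/2) < 0`: `g` is strictly decreasing on `[0, 1]` and
has exactly one zero there.
-/

open Finset Set

theorem existsUnique_mem_Ioo_eq_zero_of_strictAntiOn {f : ℝ → ℝ} {a b : ℝ} (hab : a ≤ b)
    (hf : ContinuousOn f (Icc a b)) (hanti : StrictAntiOn f (Icc a b))
    (ha : 0 < f a) (hb : f b < 0) :
    ∃! c, c ∈ Ioo a b ∧ f c = 0 := by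
  obtain ⟨c, hc, hfc⟩ := intermediate_value_Ioo' hab hf ⟨hb, ha⟩
  refine ⟨c, ⟨hc, hfc⟩, fun d ⟨hd, hfd⟩ => ?_⟩
  exact hanti.injOn (Ioo_subset_Icc_self hd) (Ioo_subset_Icc_self hc) (hfd.trans hfc.symm)

theorem sum_range_succ_cast (n : ℕ) :
    ∑ k ∈ range n, ((k : ℝ) + 1) = (n : ℝ) * ((n : ℝ) + 1) / 2 := by
  induction n with
  | zero => simp
  | succ n ih => rw [sum_range_succ, ih]; push_cast; ring

theorem mul_pow_le_sum_range_succ_mul_pow (n : ℕ) {a : ℝ} (h0 : 0 ≤ a) (h1 : a ≤ 1) :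
    ((n : ℝ) + 1) * ((n : ℝ) + 2) / 2 * a ^ n ≤ ∑ k ∈ range (n + 1), ((k : ℝ) + 1) * a ^ k := by
  calc ((n : ℝ) + 1) * ((n : ℝ) + 2) / 2 * a ^ n
      = ∑ k ∈ range (n + 1), ((k : ℝ) + 1) * a ^ n := by
        rw [← sum_mul, sum_range_succ_cast]; push_cast; ring
    _ ≤ ∑ k ∈ range (n + 1), ((k : ℝ) + 1) * a ^ k := by
        refine sum_le_sum fun k hk => ?_
        have hkn : k ≤ n := Nat.lt_succ_iff.mp (mem_range.mp hk)
        exact mul_le_mul_of_nonneg_left (pow_le_pow_of_le_one h0 h1 hkn) (by positivity)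

noncomputable def geomBayesCofactor (x : ℕ) (a : ℝ) : ℝ :=
  ((x : ℝ) + 1) * (1 + a ^ (x + 2)) - 3 * ∑ k ∈ range (x + 1), a ^ (k + 1)

namespace geomBayesCofactor

variable (x : ℕ)

theorem sub_one_mul (a : ℝ) :
    (a - 1) * geomBayesCofactor x a = ((x : ℝ) + 1) * a ^ (x + 3) - ((x : ℝ) + 4) * a ^ (x + 2)
      + ((x : ℝ) + 4) * a - ((x : ℝ) + 1) := by
  have hgeom : (∑ k ∈ range (x + 1), a ^ (k + 1)) * (a - 1) = a * (a ^ (x + 1) - 1) := by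
    simp only [pow_succ', ← mul_sum, mul_assoc, geom_sum_mul]
  rw [geomBayesCofactor]
  linear_combination -3 * hgeom

theorem hasDerivAt (a : ℝ) :
    HasDerivAt (geomBayesCofactor x)
      (((x : ℝ) + 1) * (((x : ℝ) + 2) * a ^ (x + 1))
        - 3 * ∑ k ∈ range (x + 1), ((k : ℝ) + 1) * a ^ k) a := by
  have hpow : HasDerivAt (fun a : ℝ => 1 + a ^ (x + 2)) (((x : ℝ) + 2) * a ^ (x + 1)) a := by
    simpa using (hasDerivAt_pow (x + 2) a).const_add 1
  have hsum : HasDerivAt (fun a : ℝ => ∑ k ∈ range (x + 1), a ^ (k + 1))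
      (∑ k ∈ range (x + 1), ((k : ℝ) + 1) * a ^ k) a :=
    HasDerivAt.fun_sum fun k _ => by simpa using hasDerivAt_pow (k + 1) a
  exact (hpow.const_mul _).sub (hsum.const_mul 3)

theorem continuous : Continuous (geomBayesCofactor x) :=
  continuous_iff_continuousAt.mpr fun a => (hasDerivAt x a).differentiableAt.continuousAt

theorem deriv_neg {a : ℝ} (h0 : 0 < a) (h1 : a < 1) : deriv (geomBayesCofactor x) a < 0 := by
  rw [(hasDerivAt x a).deriv]
  have hsum := mul_pow_le_sum_range_succ_mul_pow x h0.le h1.le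
  have hpos : 0 < ((x : ℝ) + 1) * ((x : ℝ) + 2) * a ^ x := by positivity
  rw [pow_succ]
  nlinarith

theorem strictAntiOn : StrictAntiOn (geomBayesCofactor x) (Icc 0 1) :=
  strictAntiOn_of_deriv_neg (convex_Icc 0 1) (continuous x).continuousOn fun a ha => by
    rw [interior_Icc] at ha
    exact deriv_neg x ha.1 ha.2

theorem apply_zero : geomBayesCofactor x 0 = (x : ℝ) + 1 := by
  simp [geomBayesCofactor]

theorem apply_one : geomBayesCofactor x 1 = -((x : ℝ) + 1) := by
  simp only [geomBayesCofactor, one_pow, sum_const, card_range, nsmul_eq_mul, Nat.cast_add,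
    Nat.cast_one, mul_one]
  ring

end geomBayesCofactor

theorem geometric_iterative_bayes_unique_zero_general (x : ℕ) :
    ∃! a : ℝ, a ∈ Set.Ioo (0 : ℝ) 1 ∧
      ((x : ℝ) + 1) * a ^ (x + 3) - ((x : ℝ) + 4) * a ^ (x + 2)
        + ((x : ℝ) + 4) * a - ((x : ℝ) + 1) = 0 := by
  have hx : (0 : ℝ) < (x : ℝ) + 1 := by positivity
  have hunique := existsUnique_mem_Ioo_eq_zero_of_strictAntiOn zero_le_one
    (geomBayesCofactor.continuous x).continuousOn (geomBayesCofactor.strictAntiOn x)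
    (by rw [geomBayesCofactor.apply_zero]; exact hx)
    (by rw [geomBayesCofactor.apply_one]; linarith)
  refine (existsUnique_congr fun a => and_congr_right fun ha => ?_).mp hunique
  rw [← geomBayesCofactor.sub_one_mul, mul_eq_zero, sub_eq_zero, or_iff_right ha.2.ne]

/-- The polynomial `(x+1)a^{x+3} − (x+4)a^{x+2} + (x+4)a − (x+1)` has exactly one zero
in the open interval `(0, 1)` for every natural number `x ≥ 1`. -/
theorem geometric_iterative_bayes_unique_zero (x : ℕ) (hx : 1 ≤ x) :
    ∃! a : ℝ, a ∈ Set.Ioo (0 : ℝ) 1 ∧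
      ((x : ℝ) + 1) * a ^ (x + 3) - ((x : ℝ) + 4) * a ^ (x + 2)
        + ((x : ℝ) + 4) * a - ((x : ℝ) + 1) = 0 :=
  geometric_iterative_bayes_unique_zero_general x
end

section
/- Let n and x be natural numbers with x ≤ n. For every a ∈ (0, 1), the function a ↦ I_n(a, x) is differentiable at a with derivative a^{x+1} ∫₀¹ t^{x+2} (1 − a t)^{n−x} dt, and this derivative is strictly positive. -/
/-!
The substitution `u = a t` turns `I_n(a, x)` into `B_{x+1}(a) - a⁻¹ B_{x+2}(a)`, where
`B_k(a) = ∫₀^a u^k (1 - u)^{n-x} du` is an incomplete beta integral. By the fundamental theorem of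
calculus the two boundary terms of the derivative cancel, leaving `a⁻² B_{x+2}(a)`, which the same
substitution turns back into the claimed integral; it is positive because the integrand of
`B_{x+2}(a)` is positive on `(0, a) ⊆ (0, 1)`.
-/

/-- `I_n(a, x) = a^{x+2} ∫₀¹ t^{x+1} (1 − t) (1 − a t)^{n−x} dt`. -/
noncomputable def In (n x : ℕ) (a : ℝ) : ℝ :=
  a ^ (x + 2) * ∫ t in (0 : ℝ)..1, t ^ (x + 1) * (1 - t) * (1 - a * t) ^ (n - x)

open intervalIntegral

/-- The incomplete beta integral `B(b; k + 1, m + 1)`, indexed by the exponents `k, m`. -/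
noncomputable def incompleteBeta (k m : ℕ) (b : ℝ) : ℝ :=
  ∫ u in (0 : ℝ)..b, u ^ k * (1 - u) ^ m

theorem continuous_pow_mul_one_sub_pow (k m : ℕ) :
    Continuous fun u : ℝ => u ^ k * (1 - u) ^ m := by
  fun_prop

theorem hasDerivAt_incompleteBeta (k m : ℕ) (b : ℝ) :
    HasDerivAt (incompleteBeta k m) (b ^ k * (1 - b) ^ m) b :=
  have hc := continuous_pow_mul_one_sub_pow k m
  integral_hasDerivAt_right (hc.intervalIntegrable _ _) (hc.stronglyMeasurableAtFilter _ _)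
    hc.continuousAt

theorem incompleteBeta_pos (k m : ℕ) {b : ℝ} (hb₀ : 0 < b) (hb₁ : b ≤ 1) :
    0 < incompleteBeta k m b :=
  intervalIntegral_pos_of_pos_on ((continuous_pow_mul_one_sub_pow k m).intervalIntegrable _ _)
    (fun _ hu => mul_pos (pow_pos hu.1 k) (pow_pos (by linarith [hu.2]) m)) hb₀

theorem integral_pow_mul_one_sub_mul_pow (k m : ℕ) {b : ℝ} (hb : b ≠ 0) :
    ∫ t in (0 : ℝ)..1, t ^ k * (1 - b * t) ^ m = (b ^ (k + 1))⁻¹ * incompleteBeta k m b := by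
  have hscale : ∀ t : ℝ,
      t ^ k * (1 - b * t) ^ m = (b ^ k)⁻¹ * ((b * t) ^ k * (1 - b * t) ^ m) := fun t => by
    rw [mul_pow]; field_simp
  simp_rw [hscale]
  rw [integral_const_mul, integral_comp_mul_left (fun u => u ^ k * (1 - u) ^ m) hb,
    mul_zero, mul_one, smul_eq_mul, incompleteBeta, ← mul_assoc, ← mul_inv, ← pow_succ]

theorem In_eq_incompleteBeta (n x : ℕ) {b : ℝ} (hb : b ≠ 0) :
    In n x b = incompleteBeta (x + 1) (n - x) b - b⁻¹ * incompleteBeta (x + 2) (n - x) b := by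
  have hsplit : ∀ t : ℝ, t ^ (x + 1) * (1 - t) * (1 - b * t) ^ (n - x) =
      t ^ (x + 1) * (1 - b * t) ^ (n - x) - t ^ (x + 2) * (1 - b * t) ^ (n - x) := fun t => by
    ring
  have hint : ∀ k, IntervalIntegrable (fun t : ℝ => t ^ k * (1 - b * t) ^ (n - x))
      MeasureTheory.volume 0 1 :=
    fun k => Continuous.intervalIntegrable (by fun_prop) _ _
  simp_rw [In, hsplit]
  rw [integral_sub (hint _) (hint _), integral_pow_mul_one_sub_mul_pow _ _ hb,
    integral_pow_mul_one_sub_mul_pow _ _ hb]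
  field_simp
  ring

theorem hasDerivAt_In (n x : ℕ) {a : ℝ} (ha : a ≠ 0) :
    HasDerivAt (In n x) ((a ^ 2)⁻¹ * incompleteBeta (x + 2) (n - x) a) a := by
  have hformula : In n x =ᶠ[nhds a]
      fun b => incompleteBeta (x + 1) (n - x) b - b⁻¹ * incompleteBeta (x + 2) (n - x) b :=
    Filter.eventually_of_mem (isOpen_ne.mem_nhds ha) fun b hb => In_eq_incompleteBeta n x hb
  have hderiv := (hasDerivAt_incompleteBeta (x + 1) (n - x) a).sub
    ((hasDerivAt_inv ha).mul (hasDerivAt_incompleteBeta (x + 2) (n - x) a))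
  -- the boundary terms `a^{x+1}(1-a)^{n-x}` and `a⁻¹ a^{x+2}(1-a)^{n-x}` cancel
  refine (hderiv.congr_of_eventuallyEq hformula).congr_deriv ?_
  field_simp
  ring

theorem In_hasDerivAt_and_pos_general (n x : ℕ) (a : ℝ) (ha : a ∈ Set.Ioo (0 : ℝ) 1) :
    HasDerivAt (fun a => In n x a)
      (a ^ (x + 1) * ∫ t in (0 : ℝ)..1, t ^ (x + 2) * (1 - a * t) ^ (n - x)) a ∧
    0 < a ^ (x + 1) * ∫ t in (0 : ℝ)..1, t ^ (x + 2) * (1 - a * t) ^ (n - x) := by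
  obtain ⟨ha₀, ha₁⟩ := ha
  have hB := incompleteBeta_pos (x + 2) (n - x) ha₀ ha₁.le
  have hrescale : a ^ (x + 1) * ∫ t in (0 : ℝ)..1, t ^ (x + 2) * (1 - a * t) ^ (n - x) =
      (a ^ 2)⁻¹ * incompleteBeta (x + 2) (n - x) a := by
    rw [integral_pow_mul_one_sub_mul_pow _ _ ha₀.ne']
    field_simp
    ring
  rw [hrescale]
  exact ⟨hasDerivAt_In n x ha₀.ne', by positivity⟩

/-- On `(0,1)`, `a ↦ I_n(a, x)` has derivative `a^{x+1} ∫₀¹ t^{x+2} (1 − a t)^{n−x} dt`,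
which is strictly positive. -/
theorem In_hasDerivAt_and_pos (n x : ℕ) (hx : x ≤ n) (a : ℝ) (ha : a ∈ Set.Ioo (0 : ℝ) 1) :
    HasDerivAt (fun a => In n x a)
      (a ^ (x + 1) * ∫ t in (0 : ℝ)..1, t ^ (x + 2) * (1 - a * t) ^ (n - x)) a ∧
    0 < a ^ (x + 1) * ∫ t in (0 : ℝ)..1, t ^ (x + 2) * (1 - a * t) ^ (n - x) :=
  In_hasDerivAt_and_pos_general n x a ha
end

section
/- Let n and x be natural numbers with x ≤ n. Then I_n(0, x) = 0 and I_n(a, x) is strictly increasing in a on the interval [0, 1]: for all 0 ≤ a < a' ≤ 1 one has I_n(a, x) < I_n(a', x). -/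
lemma In_integrand_cont (n x : ℕ) (a : ℝ) :
    Continuous fun s : ℝ => s ^ (x + 1) * (1 - s / a) * (1 - s) ^ (n - x) := by
  fun_prop

lemma In_eq (n x : ℕ) {a : ℝ} (ha : a ≠ 0) :
    In n x a = ∫ s in (0 : ℝ)..a, s ^ (x + 1) * (1 - s / a) * (1 - s) ^ (n - x) := by
  have key := intervalIntegral.smul_integral_comp_mul_left
    (fun s : ℝ => s ^ (x + 1) * (1 - s / a) * (1 - s) ^ (n - x)) a (a := 0) (b := 1)
  simp only [mul_zero, mul_one] at key
  rw [← key]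
  have hcongr : (∫ t in (0:ℝ)..1,
      (a * t) ^ (x + 1) * (1 - a * t / a) * (1 - a * t) ^ (n - x))
      = ∫ t in (0:ℝ)..1, a ^ (x + 1) * (t ^ (x + 1) * (1 - t) * (1 - a * t) ^ (n - x)) := by
    apply intervalIntegral.integral_congr
    intro t _
    dsimp only
    rw [mul_pow, mul_comm a t, mul_div_assoc, div_self ha]
    ring
  simp only [hcongr, intervalIntegral.integral_const_mul, smul_eq_mul, In]
  ring

/-- `I_n(0, x) = 0` and `I_n(·, x)` is strictly increasing on `[0, 1]`. -/
theorem In_zero_and_strictMono (n x : ℕ) (hx : x ≤ n) :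
    In n x 0 = 0 ∧
    ∀ a a' : ℝ, 0 ≤ a → a < a' → a' ≤ 1 → In n x a < In n x a' := by
  have hzero : In n x 0 = 0 := by simp [In]
  refine ⟨hzero, fun a a' ha haa' ha'1 => ?_⟩
  have ha'pos : 0 < a' := lt_of_le_of_lt ha haa'
  set g' : ℝ → ℝ := fun s => s ^ (x + 1) * (1 - s / a') * (1 - s) ^ (n - x) with hg'
  have hg'c : Continuous g' := In_integrand_cont n x a'
  have hpos : 0 < ∫ s in a..a', g' s := by
    apply intervalIntegral.intervalIntegral_pos_of_pos_on
      (hg'c.intervalIntegrable _ _) _ haa'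
    intro s hs
    have hs0 : 0 < s := lt_of_le_of_lt ha hs.1
    have hs1 : s < 1 := lt_of_lt_of_le hs.2 ha'1
    have h1 : (0:ℝ) < s ^ (x + 1) := pow_pos hs0 _
    have h2 : (0:ℝ) < 1 - s / a' := by
      have : s / a' < 1 := (div_lt_one ha'pos).mpr hs.2
      linarith
    have h3 : (0:ℝ) < (1 - s) ^ (n - x) := pow_pos (by linarith) _
    positivity
  have hIa' : In n x a' = (∫ s in (0:ℝ)..a, g' s) + ∫ s in a..a', g' s := by
    rw [In_eq n x ha'pos.ne']
    exact (intervalIntegral.integral_add_adjacent_intervals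
      (hg'c.intervalIntegrable _ _) (hg'c.intervalIntegrable _ _)).symm
  rcases eq_or_lt_of_le ha with rfl | hapos
  · rw [hzero, hIa']
    simp only [intervalIntegral.integral_same]
    linarith [intervalIntegral.integral_same (μ := MeasureTheory.volume) (a := (0:ℝ)) (f := g')]
  · set g : ℝ → ℝ := fun s => s ^ (x + 1) * (1 - s / a) * (1 - s) ^ (n - x) with hg
    have hgc : Continuous g := In_integrand_cont n x a
    have hmono : (∫ s in (0:ℝ)..a, g s) ≤ ∫ s in (0:ℝ)..a, g' s := by
      apply intervalIntegral.integral_mono_on (le_of_lt hapos)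
        (hgc.intervalIntegrable _ _) (hg'c.intervalIntegrable _ _)
      intro s hs
      have hs0 : 0 ≤ s := hs.1
      have hdiv : s / a' ≤ s / a := div_le_div_of_nonneg_left hs0 hapos haa'.le
      have h1 : 1 - s / a ≤ 1 - s / a' := by linarith
      have hs1 : (0:ℝ) ≤ 1 - s := by
        have : s ≤ 1 := le_trans hs.2 (le_trans haa'.le ha'1)
        linarith
      have := mul_le_mul_of_nonneg_left h1 (pow_nonneg hs0 (x + 1))
      exact mul_le_mul_of_nonneg_right this (pow_nonneg hs1 _)
    rw [In_eq n x hapos.ne', hIa']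
    linarith
end

section
/- Let n and x be natural numbers with x ≤ n. Then there exists a unique real number τ with 0 < τ < 1 such that I_n(τ, x) = I_n(1 − τ, n − x). -/
/-!
Substituting `s = a t` gives `I_n(a, x) = ∫₀^a (1 - s/a) s^{x+1} (1 - s)^{n-x} ds`. As `a` grows,
both the weight `1 - s/a` and the range of integration grow, so `a ↦ I_n(a, x)` is strictly
increasing on `[0, 1]`, and it vanishes at `0`. Hence `τ ↦ I_n(τ, x) - I_n(1 - τ, n - x)` is
continuous and strictly increasing on `[0, 1]`, negative at `0` and positive at `1`.
-/

open Set intervalIntegral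

theorem strictMonoOn_integral_one_sub_div_mul {g : ℝ → ℝ} (hg : Continuous g)
    (hpos : ∀ s ∈ Ioo (0 : ℝ) 1, 0 < g s) :
    StrictMonoOn (fun a => ∫ s in (0 : ℝ)..a, (1 - s / a) * g s) (Icc 0 1) := by
  intro a ha b hb hab
  have hb0 : 0 < b := ha.1.trans_lt hab
  have hint : ∀ c u v : ℝ, IntervalIntegrable (fun s => (1 - s / c) * g s) MeasureTheory.volume u v :=
    fun c u v => (by fun_prop : Continuous fun s => (1 - s / c) * g s).intervalIntegrable u v
  calc ∫ s in (0 : ℝ)..a, (1 - s / a) * g s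
      ≤ ∫ s in (0 : ℝ)..a, (1 - s / b) * g s := by
        refine integral_mono_on_of_le_Ioo ha.1 (hint a 0 a) (hint b 0 a) fun s hs => ?_
        have : s / b ≤ s / a := div_le_div_of_nonneg_left hs.1.le (hs.1.trans hs.2) hab.le
        exact mul_le_mul_of_nonneg_right (by linarith) (hpos s ⟨hs.1, hs.2.trans_le ha.2⟩).le
    _ < ∫ s in (0 : ℝ)..b, (1 - s / b) * g s := by
        rw [← integral_add_adjacent_intervals (hint b 0 a) (hint b a b), lt_add_iff_pos_right]
        refine intervalIntegral_pos_of_pos_on (hint b a b) (fun s hs => mul_pos ?_ ?_) hab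
        · exact sub_pos.2 ((div_lt_one hb0).2 hs.2)
        · exact hpos s ⟨ha.1.trans_lt hs.1, hs.2.trans_le hb.2⟩

theorem existsUnique_mem_Ioo_eq_comp_one_sub {f g : ℝ → ℝ} (hfc : ContinuousOn f (Icc 0 1))
    (hgc : ContinuousOn g (Icc 0 1)) (hf : StrictMonoOn f (Icc 0 1))
    (hg : StrictMonoOn g (Icc 0 1)) (h0 : f 0 = g 0) :
    ∃! τ : ℝ, τ ∈ Ioo (0 : ℝ) 1 ∧ f τ = g (1 - τ) := by
  have hflip : MapsTo (fun τ : ℝ => 1 - τ) (Icc 0 1) (Icc 0 1) :=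
    fun τ hτ => ⟨by linarith [hτ.2], by linarith [hτ.1]⟩
  set F : ℝ → ℝ := fun τ => f τ - g (1 - τ)
  have hFmono : StrictMonoOn F (Icc 0 1) := fun a ha b hb hab =>
    sub_lt_sub (hf ha hb hab) (hg (hflip hb) (hflip ha) (by linarith))
  have hFc : ContinuousOn F (Icc 0 1) :=
    hfc.sub (hgc.comp (continuous_const.sub continuous_id).continuousOn hflip)
  have hzero : (0 : ℝ) ∈ Ioo (F 0) (F 1) := by
    have hg01 := hg (left_mem_Icc.2 zero_le_one) (right_mem_Icc.2 zero_le_one) zero_lt_one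
    have hf01 := hf (left_mem_Icc.2 zero_le_one) (right_mem_Icc.2 zero_le_one) zero_lt_one
    simp only [F, sub_zero, sub_self, mem_Ioo]
    constructor <;> linarith
  obtain ⟨τ, hτ, hFτ⟩ := intermediate_value_Ioo zero_le_one hFc hzero
  refine ⟨τ, ⟨hτ, sub_eq_zero.1 hFτ⟩, fun σ ⟨hσ, hfσ⟩ => ?_⟩
  refine hFmono.injOn (Ioo_subset_Icc_self hσ) (Ioo_subset_Icc_self hτ) ?_
  simp only [F, hfσ, sub_self] at hFτ ⊢
  exact hFτ.symm

theorem In_eq_integral (n k : ℕ) (a : ℝ) :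
    In n k a = ∫ s in (0 : ℝ)..a, (1 - s / a) * (s ^ (k + 1) * (1 - s) ^ (n - k)) := by
  rcases eq_or_ne a 0 with rfl | ha
  · simp [In]
  have hsubst := integral_comp_mul_left
    (fun s => (1 - s / a) * (s ^ (k + 1) * (1 - s) ^ (n - k))) ha (a := 0) (b := 1)
  simp only [mul_zero, mul_one, smul_eq_mul] at hsubst
  rw [← mul_inv_cancel_left₀ ha (∫ s in (0 : ℝ)..a, _), ← hsubst, ← integral_const_mul, In,
    ← integral_const_mul]
  congr 1 with t
  field_simp
  ring

theorem continuous_In (n k : ℕ) : Continuous (In n k) := by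
  unfold In
  fun_prop

theorem strictMonoOn_In (n k : ℕ) : StrictMonoOn (In n k) (Icc 0 1) := by
  have := strictMonoOn_integral_one_sub_div_mul
    (by fun_prop : Continuous fun s : ℝ => s ^ (k + 1) * (1 - s) ^ (n - k))
    fun s hs => mul_pos (pow_pos hs.1 _) (pow_pos (sub_pos.2 hs.2) _)
  simpa only [← In_eq_integral] using this

theorem In_fixed_point_exists_unique_general (n x : ℕ) :
    ∃! τ : ℝ, τ ∈ Set.Ioo (0 : ℝ) 1 ∧ In n x τ = In n (n - x) (1 - τ) :=
  existsUnique_mem_Ioo_eq_comp_one_sub (continuous_In n x).continuousOn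
    (continuous_In n (n - x)).continuousOn (strictMonoOn_In n x) (strictMonoOn_In n (n - x))
    (by simp [In])

/-- Theorem 2 of the paper: the iterative Bayes estimate under the triangle prior exists
and is unique, i.e. there is a unique `τ ∈ (0,1)` with `I_n(τ, x) = I_n(1 − τ, n − x)`. -/
theorem In_fixed_point_exists_unique (n x : ℕ) (hx : x ≤ n) :
    ∃! τ : ℝ, τ ∈ Set.Ioo (0 : ℝ) 1 ∧ In n x τ = In n (n - x) (1 - τ) :=
  In_fixed_point_exists_unique_general n x
end

section
/- Let n and x be natural numbers with x ≤ n, and let τ (respectively τ') be the unique number in (0,1) satisfying I_n(τ, x) = I_n(1 − τ, n − x) (respectively I_n(τ', n − x) = I_n(1 − τ', x)). Then τ + τ' = 1. In particular, if n = 2x then τ = 1/2. -/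
open Set intervalIntegral

section Primitive

variable {f : ℝ → ℝ}

theorem hasDerivAt_integral_sub_integral_mul_div (hf : Continuous f) {a : ℝ} (ha : a ≠ 0) :
    HasDerivAt (fun b => (∫ s in (0 : ℝ)..b, f s) - (∫ s in (0 : ℝ)..b, s * f s) / b)
      ((∫ s in (0 : ℝ)..a, s * f s) / a ^ 2) a := by
  have hsf : Continuous fun s => s * f s := by fun_prop
  have hF := integral_hasDerivAt_right (hf.intervalIntegrable 0 a)
    (hf.stronglyMeasurableAtFilter _ _) hf.continuousAt
  have hG := integral_hasDerivAt_right (hsf.intervalIntegrable 0 a)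
    (hsf.stronglyMeasurableAtFilter _ _) hsf.continuousAt
  refine (hF.sub (hG.div (hasDerivAt_id a) ha)).congr_deriv ?_
  simp only [id]
  field_simp
  ring

theorem strictMonoOn_integral_sub_integral_mul_div (hf : Continuous f) {b : ℝ}
    (hpos : ∀ s ∈ Ioo 0 b, 0 < f s) :
    StrictMonoOn (fun a => (∫ s in (0 : ℝ)..a, f s) - (∫ s in (0 : ℝ)..a, s * f s) / a)
      (Ioo 0 b) := by
  have hderiv := fun a (ha : a ∈ Ioo 0 b) => hasDerivAt_integral_sub_integral_mul_div hf ha.1.ne'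
  apply strictMonoOn_of_hasDerivWithinAt_pos (convex_Ioo 0 b)
  · exact fun a ha => (hderiv a ha).continuousAt.continuousWithinAt
  · rw [interior_Ioo]
    exact fun a ha => (hderiv a ha).hasDerivWithinAt
  · rw [interior_Ioo]
    intro a ha
    have hsf : Continuous fun s => s * f s := by fun_prop
    have hint : 0 < ∫ s in (0 : ℝ)..a, s * f s :=
      intervalIntegral_pos_of_pos_on (hsf.intervalIntegrable _ _)
        (fun s hs => mul_pos hs.1 (hpos s ⟨hs.1, hs.2.trans ha.2⟩)) ha.1
    have := ha.1
    positivity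

end Primitive

theorem In_eq_integral_sub (n x : ℕ) {a : ℝ} (ha : a ≠ 0) :
    In n x a = (∫ s in (0 : ℝ)..a, s ^ (x + 1) * (1 - s) ^ (n - x))
      - (∫ s in (0 : ℝ)..a, s * (s ^ (x + 1) * (1 - s) ^ (n - x))) / a := by
  have hcont : Continuous fun s : ℝ => s ^ (x + 1) * (1 - s) ^ (n - x) := by fun_prop
  have hscont : Continuous fun s : ℝ => s * (s ^ (x + 1) * (1 - s) ^ (n - x)) := by fun_prop
  have hsubst := integral_comp_mul_left
    (fun s => a * (s ^ (x + 1) * (1 - s) ^ (n - x)) - s * (s ^ (x + 1) * (1 - s) ^ (n - x)))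
    (a := 0) (b := 1) ha
  rw [mul_zero, mul_one, integral_sub ((hcont.intervalIntegrable _ _).const_mul a)
    (hscont.intervalIntegrable _ _), integral_const_mul, smul_eq_mul] at hsubst
  have hintegrand : (fun t => a * ((a * t) ^ (x + 1) * (1 - a * t) ^ (n - x))
        - a * t * ((a * t) ^ (x + 1) * (1 - a * t) ^ (n - x)))
      = fun t => a ^ (x + 2) * (t ^ (x + 1) * (1 - t) * (1 - a * t) ^ (n - x)) := by
    funext t
    ring
  rw [hintegrand, integral_const_mul] at hsubst
  rw [In, hsubst]
  field_simp

theorem In_strictMonoOn (n x : ℕ) : StrictMonoOn (In n x) (Ioo 0 1) := by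
  refine (strictMonoOn_integral_sub_integral_mul_div (by fun_prop) ?_).congr
    (fun a ha => (In_eq_integral_sub n x ha.1.ne').symm)
  intro s hs
  have : 0 < 1 - s := sub_pos.2 hs.2
  have := hs.1
  positivity

theorem eq_of_In_eq_In_one_sub (n x y : ℕ) {σ τ : ℝ} (hσ : σ ∈ Ioo (0 : ℝ) 1)
    (hτ : τ ∈ Ioo (0 : ℝ) 1) (hσeq : In n x σ = In n y (1 - σ))
    (hτeq : In n x τ = In n y (1 - τ)) : σ = τ := by
  have hmono : StrictMonoOn (fun a => In n x a - In n y (1 - a)) (Ioo 0 1) := by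
    intro a ha b hb hab
    have hreflect : ∀ c ∈ Ioo (0 : ℝ) 1, 1 - c ∈ Ioo (0 : ℝ) 1 :=
      fun c hc => ⟨sub_pos.2 hc.2, by linarith [hc.1]⟩
    have := In_strictMonoOn n x ha hb hab
    have := In_strictMonoOn n y (hreflect b hb) (hreflect a ha) (by linarith)
    simp only
    linarith
  exact hmono.injOn hσ hτ (by simp only [hσeq, hτeq, sub_self])

theorem In_fixed_point_add_eq_one (n x : ℕ) {τ τ' : ℝ} (hτ : τ ∈ Ioo (0 : ℝ) 1)
    (hτ' : τ' ∈ Ioo (0 : ℝ) 1) (heq : In n x τ = In n (n - x) (1 - τ))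
    (heq' : In n (n - x) τ' = In n x (1 - τ')) : τ + τ' = 1 := by
  have hmirror : 1 - τ' ∈ Ioo (0 : ℝ) 1 := ⟨sub_pos.2 hτ'.2, by linarith [hτ'.1]⟩
  have := eq_of_In_eq_In_one_sub n x (n - x) hτ hmirror heq (by rw [sub_sub_cancel, heq'])
  linarith

theorem In_fixed_point_symm_general (n x : ℕ)
    (τ τ' : ℝ) (hτ : τ ∈ Set.Ioo (0 : ℝ) 1) (hτ' : τ' ∈ Set.Ioo (0 : ℝ) 1)
    (heq : In n x τ = In n (n - x) (1 - τ))
    (heq' : In n (n - x) τ' = In n x (1 - τ')) :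
    τ + τ' = 1 ∧ (n = 2 * x → τ = 1 / 2) := by
  refine ⟨In_fixed_point_add_eq_one n x hτ hτ' heq heq', fun hn => ?_⟩
  have hnx : n - x = x := by omega
  have := In_fixed_point_add_eq_one n x hτ hτ heq (by rw [hnx] at heq ⊢; exact heq)
  linarith

/-- Symmetry of the iterative Bayes estimates: `p̂_IB(x) + p̂_IB(n − x) = 1`; in
particular `p̂_IB(x) = 1/2` when `n = 2x`. -/
theorem In_fixed_point_symm (n x : ℕ) (hx : x ≤ n)
    (τ τ' : ℝ) (hτ : τ ∈ Set.Ioo (0 : ℝ) 1) (hτ' : τ' ∈ Set.Ioo (0 : ℝ) 1)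
    (heq : In n x τ = In n (n - x) (1 - τ))
    (heq' : In n (n - x) τ' = In n x (1 - τ')) :
    τ + τ' = 1 ∧ (n = 2 * x → τ = 1 / 2) :=
  In_fixed_point_symm_general n x τ τ' hτ hτ' heq heq'
end

section
/- Let n and x be natural numbers with x ≤ n. Then for every real number a, Σ_{r=0}^{n−x} C(n+3, n−x−r) C(x+r, r) (−1)^r a^r = Σ_{k=0}^{n−x} C(n+3, k) C(n−x−k+2, 2) a^{n−x−k} (1 − a)^k. In particular, for every a with 0 < a < 1 the sum H(a) = Σ_{r=0}^{n−x} C(n+3, n−x−r) C(x+r, r) (−1)^r a^r is strictly positive. -/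
/-!
With `m = n - x`, `H(a)` is the coefficient of `t^m` in `(1 + t)^(x + m + 3) (1 + a t)^-(x + 1)`:
expanding `(1 + a t)^-(x + 1)` gives the defining sum. Writing instead
`1 + t = (1 + a t) + (1 - a) t` and expanding binomially, the `k`-th term is
`(1 - a)^k t^k (1 + a t)^(m + 2 - k)`, which is a polynomial when `k ≤ m` and does not reach `t^m`
when `k > m`. This gives the second form, all of whose terms are nonnegative for `0 < a < 1`, the
one for `k = 0` being positive.
-/

open Finset PowerSeries

namespace PowerSeries

variable {R : Type*} [CommRing R]

theorem coeff_one_add_X_pow (n k : ℕ) : coeff k ((1 + X : R⟦X⟧) ^ n) = n.choose k := by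
  rw [← Polynomial.coe_X, ← Polynomial.coe_one, ← Polynomial.coe_add, ← Polynomial.coe_pow,
    Polynomial.coeff_coe, Polynomial.coeff_one_add_X_pow]

theorem coeff_one_add_C_mul_X_pow (a : R) (n k : ℕ) :
    coeff k ((1 + C a * X : R⟦X⟧) ^ n) = n.choose k * a ^ k := by
  rw [← rescale_X, ← map_one (rescale a), ← map_add, ← map_pow, coeff_rescale,
    coeff_one_add_X_pow, mul_comm]

theorem one_add_C_mul_X_pow_mul_rescale_neg_invOneSubPow (a : R) (d : ℕ) :
    (1 + C a * X) ^ d * rescale (-a) (invOneSubPow R d).val = 1 := by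
  have h : rescale (-a) (1 - X : R⟦X⟧) = 1 + C a * X := by simp [sub_eq_add_neg]
  rw [← h, ← map_pow, ← map_mul, ← invOneSubPow_inv_eq_one_sub_pow, Units.inv_eq_val_inv,
    Units.inv_mul, map_one]

theorem coeff_rescale_neg_invOneSubPow (a : R) (d r : ℕ) :
    coeff r (rescale (-a) (invOneSubPow R (d + 1)).val) = (d + r).choose r * (-a) ^ r := by
  rw [coeff_rescale, invOneSubPow_val_succ_eq_mk_add_choose, coeff_mk, Nat.choose_symm_add,
    mul_comm]

theorem coeff_one_add_X_pow_mul_of_mul_one_add_C_mul_X_pow_eq_one {a : R} {w : R⟦X⟧} {x : ℕ}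
    (hw : (1 + C a * X) ^ (x + 1) * w = 1) (m : ℕ) :
    coeff m ((1 + X) ^ (x + m + 3) * w) = ∑ k ∈ range (m + 1),
      ((x + m + 3).choose k : R) * ((m - k + 2).choose 2 : R) * a ^ (m - k) * (1 - a) ^ k := by
  set u : R⟦X⟧ := 1 + C a * X
  have hsplit : (1 + X : R⟦X⟧) = C (1 - a) * X + u := by simp only [u, map_sub, map_one]; ring
  have hterm (k : ℕ) :
      (C (1 - a) * X) ^ k * u ^ (x + m + 3 - k) * ((x + m + 3).choose k : R⟦X⟧) * w
        = C ((1 - a) ^ k * (x + m + 3).choose k) * (X ^ k * (u ^ (x + m + 3 - k) * w)) := by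
    simp only [map_mul, map_pow, map_natCast]; ring
  rw [hsplit, add_pow, sum_mul, map_sum]
  simp only [hterm, coeff_C_mul, coeff_X_pow_mul']
  refine (sum_subset (range_subset_range.2 (by omega)) fun k _ hk ↦ ?_).symm.trans
    (sum_congr rfl fun k hk ↦ ?_)
  · rw [if_neg (by simp only [mem_range] at hk; omega), mul_zero]
  have hkm : k ≤ m := Nat.lt_succ_iff.1 (mem_range.1 hk)
  have hu : u ^ (x + m + 3 - k) * w = u ^ (m - k + 2) := by
    rw [show x + m + 3 - k = m - k + 2 + (x + 1) by omega, pow_add, mul_assoc, hw, mul_one]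
  rw [if_pos hkm, hu, coeff_one_add_C_mul_X_pow, Nat.choose_symm_add]
  ring

end PowerSeries

theorem sum_choose_mul_choose_mul_neg_one_pow_mul_pow {R : Type*} [CommRing R] (x m : ℕ) (a : R) :
    ∑ r ∈ range (m + 1),
        ((x + m + 3).choose (m - r) : R) * ((x + r).choose r : R) * (-1) ^ r * a ^ r
      = ∑ k ∈ range (m + 1),
        ((x + m + 3).choose k : R) * ((m - k + 2).choose 2 : R) * a ^ (m - k) * (1 - a) ^ k := by
  set w := rescale (-a) (invOneSubPow R (x + 1)).val
  rw [← coeff_one_add_X_pow_mul_of_mul_one_add_C_mul_X_pow_eq_one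
    (one_add_C_mul_X_pow_mul_rescale_neg_invOneSubPow a (x + 1)), mul_comm, coeff_mul,
    Nat.sum_antidiagonal_eq_sum_range_succ fun r j ↦ coeff r w * coeff j _]
  refine sum_congr rfl fun r _ ↦ ?_
  rw [coeff_rescale_neg_invOneSubPow, coeff_one_add_X_pow, neg_pow]
  ring

theorem sum_choose_mul_choose_mul_pow_mul_one_sub_pow_pos {R : Type*} [CommRing R]
    [LinearOrder R] [IsStrictOrderedRing R] (N m : ℕ) {a : R} (ha : a ∈ Set.Ioo 0 1) :
    0 < ∑ k ∈ range (m + 1),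
      (N.choose k : R) * ((m - k + 2).choose 2 : R) * a ^ (m - k) * (1 - a) ^ k := by
  obtain ⟨ha₀, ha₁⟩ := ha
  have h1a : 0 < 1 - a := sub_pos.2 ha₁
  refine sum_pos' (fun k _ ↦ by positivity) ⟨0, mem_range.2 m.succ_pos, ?_⟩
  have : 0 < (m + 2).choose 2 := Nat.choose_pos (by omega)
  simp only [Nat.choose_zero_right, Nat.sub_zero]
  positivity

/-- `H(a) = Σ_{r=0}^{n−x} C(n+3, n−x−r) C(x+r, r) (−1)^r a^r` can be rewritten as
`Σ_{k=0}^{n−x} C(n+3, k) C(n−x−k+2, 2) a^{n−x−k} (1 − a)^k`, hence is strictly positive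
on `(0, 1)`. -/
theorem H_expansion_and_pos (n x : ℕ) (hx : x ≤ n) :
    (∀ a : ℝ, ∑ r ∈ Finset.range (n - x + 1),
        ((n + 3).choose (n - x - r) : ℝ) * ((x + r).choose r : ℝ) * (-1) ^ r * a ^ r
      = ∑ k ∈ Finset.range (n - x + 1),
        ((n + 3).choose k : ℝ) * ((n - x - k + 2).choose 2 : ℝ)
          * a ^ (n - x - k) * (1 - a) ^ k) ∧
    (∀ a : ℝ, a ∈ Set.Ioo (0 : ℝ) 1 →
      0 < ∑ r ∈ Finset.range (n - x + 1),
        ((n + 3).choose (n - x - r) : ℝ) * ((x + r).choose r : ℝ) * (-1) ^ r * a ^ r) := by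
  obtain ⟨m, rfl⟩ := Nat.exists_eq_add_of_le hx
  rw [Nat.add_sub_cancel_left]
  refine ⟨sum_choose_mul_choose_mul_neg_one_pow_mul_pow x m, fun a ha ↦ ?_⟩
  rw [sum_choose_mul_choose_mul_neg_one_pow_mul_pow]
  exact sum_choose_mul_choose_mul_pow_mul_one_sub_pow_pos _ m ha
end

section
/- Let n and x be natural numbers with x ≤ n, and let τ be the unique real number in (0,1) with I_n(τ, x) = I_n(1 − τ, n − x). Then (x+1)/(n+3) < τ < (x+2)/(n+3). More precisely: if 2x < n then (x+1)/(n+2) < τ < (x+2)/(n+3), and if 2x > n then (x+1)/(n+3) < τ < (x+1)/(n+2). -/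
open intervalIntegral Set Real

noncomputable def leftPart (g : ℝ → ℝ) (τ : ℝ) : ℝ := ∫ s in 0..τ, s * g s * (τ - s)

noncomputable def rightPart (g : ℝ → ℝ) (τ : ℝ) : ℝ := ∫ s in τ..1, (1 - s) * g s * (s - τ)

theorem rightPart_eq_leftPart_comp_one_sub (g : ℝ → ℝ) (τ : ℝ) :
    rightPart g τ = leftPart (fun s => g (1 - s)) (1 - τ) := by
  have h := integral_comp_sub_left (fun u => (1 - u) * g u * (u - τ)) 1 (a := 0) (b := 1 - τ)
  simp only [sub_sub_cancel, sub_zero] at h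
  rw [rightPart, leftPart, ← h]
  exact integral_congr fun s _ => by ring

section Balance

variable {g : ℝ → ℝ}

theorem leftPart_mono (hg : Continuous g) {a b : ℝ} (hg0 : ∀ s ∈ Icc 0 b, 0 ≤ g s)
    (ha : 0 ≤ a) (hab : a ≤ b) : b * leftPart g a ≤ a * leftPart g b := by
  simp only [leftPart, ← integral_const_mul]
  calc ∫ s in 0..a, b * (s * g s * (a - s))
      ≤ ∫ s in 0..a, a * (s * g s * (b - s)) := by
        refine integral_mono_on ha (Continuous.intervalIntegrable (by fun_prop) _ _)
          (Continuous.intervalIntegrable (by fun_prop) _ _) fun s hs => ?_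
        have : 0 ≤ s * g s := mul_nonneg hs.1 (hg0 s ⟨hs.1, hs.2.trans hab⟩)
        nlinarith [mul_nonneg this (mul_nonneg hs.1 (sub_nonneg.2 hab))]
    _ ≤ ∫ s in 0..b, a * (s * g s * (b - s)) := by
        refine integral_mono_interval le_rfl ha hab ?_
          (Continuous.intervalIntegrable (by fun_prop) _ _)
        filter_upwards [MeasureTheory.ae_restrict_mem measurableSet_Ioc] with s hs
        exact mul_nonneg ha (mul_nonneg (mul_nonneg hs.1.le (hg0 s ⟨hs.1.le, hs.2⟩))
          (sub_nonneg.2 hs.2))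

theorem rightPart_anti (hg : Continuous g) {a b : ℝ} (hg0 : ∀ s ∈ Icc a 1, 0 ≤ g s)
    (hab : a ≤ b) (hb : b ≤ 1) : (1 - a) * rightPart g b ≤ (1 - b) * rightPart g a := by
  simp only [rightPart_eq_leftPart_comp_one_sub]
  refine leftPart_mono (by fun_prop) (fun s hs => hg0 _ ⟨?_, ?_⟩) (by linarith) (by linarith)
    <;> linarith [hs.1, hs.2]

theorem lt_of_balance (hg : Continuous g) (hg0 : ∀ s ∈ Icc 0 1, 0 ≤ g s) {m τ : ℝ}
    (hm : m ∈ Ioo 0 1) (hτ : τ ∈ Ioo 0 1)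
    (hbal : (1 - τ) * leftPart g τ = τ * rightPart g τ)
    (hfail : (1 - m) * leftPart g m < m * rightPart g m) : m < τ := by
  by_contra! hτm
  have hL := leftPart_mono hg (fun s hs => hg0 s ⟨hs.1, hs.2.trans hm.2.le⟩) hτ.1.le hτm
  have hR := rightPart_anti hg (fun s hs => hg0 s ⟨hτ.1.le.trans hs.1, hs.2⟩) hτm hm.2.le
  have h1 := mul_le_mul_of_nonneg_left hL (by nlinarith [hm.2, hτ.2] : 0 ≤ (1 - m) * (1 - τ))
  have h2 := mul_lt_mul_of_pos_left hfail (by nlinarith [hτ.1, hτ.2] : 0 < τ * (1 - τ))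
  have h3 := mul_le_mul_of_nonneg_left hR (by nlinarith [hτ.1, hm.1] : 0 ≤ τ * m)
  linarith [congrArg (m * (1 - m) * ·) hbal]

theorem integral_pos_of_balance (hg : Continuous g) {τ : ℝ} (hg0 : ∀ s ∈ Ioo 0 τ, 0 < g s)
    (hτ : 0 < τ) (hbal : (1 - τ) * leftPart g τ = τ * rightPart g τ) :
    0 < ∫ s in 0..1, (1 - s) * g s * (τ - s) := by
  have hK : 0 < ∫ s in 0..τ, g s * (τ - s) ^ 2 :=
    intervalIntegral_pos_of_pos_on (Continuous.intervalIntegrable (by fun_prop) _ _)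
      (fun s hs => mul_pos (hg0 s hs) (pow_pos (sub_pos.2 hs.2) 2)) hτ
  have hsplit : ∫ s in 0..τ, g s * (τ - s) ^ 2
      = τ * (∫ s in 0..τ, (1 - s) * g s * (τ - s)) - (1 - τ) * leftPart g τ := by
    rw [leftPart, ← integral_const_mul, ← integral_const_mul,
      ← integral_sub (Continuous.intervalIntegrable (by fun_prop) _ _)
        (Continuous.intervalIntegrable (by fun_prop) _ _)]
    exact integral_congr fun s _ => by ring
  have hright : rightPart g τ = - ∫ s in τ..1, (1 - s) * g s * (τ - s) := by
    rw [rightPart, ← integral_neg]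
    exact integral_congr fun s _ => by ring
  rw [hsplit, hbal, hright, mul_neg, sub_neg_eq_add, ← mul_add,
    integral_add_adjacent_intervals (Continuous.intervalIntegrable (by fun_prop) _ _)
      (Continuous.intervalIntegrable (by fun_prop) _ _)] at hK
  exact pos_of_mul_pos_right hK hτ.le

end Balance

theorem mul_integral_lt_of_rescaled_lt {f : ℝ → ℝ} (hf : Continuous f) {m : ℝ} (hm : m ∈ Ioo 0 1)
    (hlt : ∀ w ∈ Ioo 0 1, f (1 - (1 - m) * w) < f (m * w)) :
    m * ∫ s in m..1, f s < (1 - m) * ∫ s in 0..m, f s := by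
  have hleft := mul_integral_comp_mul_left (a := 0) (b := 1) (c := m) (f := f)
  have hright := mul_integral_comp_sub_mul (a := 0) (b := 1) (c := 1 - m) (d := 1) (f := f)
  simp only [mul_zero, mul_one, sub_zero, sub_sub_cancel] at hleft hright
  have hint : 0 < ∫ w in 0..1, (f (m * w) - f (1 - (1 - m) * w)) :=
    intervalIntegral_pos_of_pos_on (Continuous.intervalIntegrable (by fun_prop) _ _)
      (fun w hw => sub_pos.2 (hlt w hw)) one_pos
  rw [integral_sub (Continuous.intervalIntegrable (by fun_prop) _ _)
    (Continuous.intervalIntegrable (by fun_prop) _ _), sub_pos] at hint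
  rw [← hleft, ← hright, mul_left_comm]
  exact mul_lt_mul_of_pos_left (mul_lt_mul_of_pos_left hint hm.1) (sub_pos.2 hm.2)

noncomputable def betaKernel (p q : ℕ) (s : ℝ) : ℝ := s ^ p * (1 - s) ^ q

section BetaKernel

variable (p q : ℕ)

@[fun_prop]
theorem continuous_betaKernel : Continuous (betaKernel p q) := by
  unfold betaKernel; fun_prop

theorem betaKernel_one_sub (s : ℝ) : betaKernel p q (1 - s) = betaKernel q p s := by
  rw [betaKernel, betaKernel, sub_sub_cancel, mul_comm]

theorem betaKernel_pos {s : ℝ} (hs : s ∈ Ioo 0 1) : 0 < betaKernel p q s :=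
  mul_pos (pow_pos hs.1 p) (pow_pos (sub_pos.2 hs.2) q)

theorem betaKernel_nonneg {s : ℝ} (hs : s ∈ Icc 0 1) : 0 ≤ betaKernel p q s :=
  mul_nonneg (pow_nonneg hs.1 p) (pow_nonneg (sub_nonneg.2 hs.2) q)

theorem hasDerivAt_betaKernel (s : ℝ) :
    HasDerivAt (betaKernel (p + 1) (q + 1))
      (betaKernel p q s * ((p + 1) - (p + q + 2) * s)) s := by
  have hq := ((hasDerivAt_id' s).const_sub 1).fun_pow (q + 1)
  refine ((hasDerivAt_pow (p + 1) s).mul hq).congr_deriv ?_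
  simp only [betaKernel]
  push_cast
  ring

theorem integral_betaKernel_mul_sub_eq_zero :
    ∫ s in 0..1, betaKernel p q s * ((p + 1) - (p + q + 2) * s) = 0 := by
  rw [integral_eq_sub_of_hasDerivAt (fun s _ => hasDerivAt_betaKernel p q s)
    (Continuous.intervalIntegrable (by fun_prop) _ _)]
  simp [betaKernel]

theorem integral_betaKernel_one_sub (a : ℝ) :
    ∫ s in 0..1 - a, betaKernel q p s = ∫ s in a..1, betaKernel p q s := by
  simpa only [betaKernel_one_sub, sub_sub_cancel, sub_zero] using
    integral_comp_sub_left (betaKernel p q) 1 (a := 0) (b := 1 - a)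

theorem leftPart_betaKernel (τ : ℝ) : leftPart (betaKernel p q) τ = τ * In (p + q) p τ := by
  have h := mul_integral_comp_mul_left (a := 0) (b := 1) (c := τ)
    (f := fun s => s * betaKernel p q s * (τ - s))
  rw [mul_zero, mul_one] at h
  rw [leftPart, ← h, In, Nat.add_sub_cancel_left, ← integral_const_mul (τ ^ (p + 2))]
  congr 1
  exact integral_congr fun t _ => by simp only [betaKernel]; ring

theorem rightPart_betaKernel (τ : ℝ) :
    rightPart (betaKernel p q) τ = (1 - τ) * In (p + q) q (1 - τ) := by
  simp only [rightPart_eq_leftPart_comp_one_sub, betaKernel_one_sub, leftPart_betaKernel,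
    add_comm p q]

theorem div_lt_of_integral_betaKernel_pos {τ : ℝ}
    (h : 0 < ∫ s in 0..1, (1 - s) * betaKernel p q s * (τ - s)) :
    ((p : ℝ) + 1) / (p + q + 3) < τ := by
  have hB : 0 < ∫ s in 0..1, betaKernel p (q + 1) s :=
    intervalIntegral_pos_of_pos_on (Continuous.intervalIntegrable (by fun_prop) _ _)
      (fun s hs => betaKernel_pos p (q + 1) hs) one_pos
  have hsplit : (p + q + 3) * ∫ s in 0..1, (1 - s) * betaKernel p q s * (τ - s)
      = ((p + q + 3) * τ - (p + 1)) * (∫ s in 0..1, betaKernel p (q + 1) s)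
        + ∫ s in 0..1, betaKernel p (q + 1) s * ((p + 1) - (p + ↑(q + 1) + 2) * s) := by
    rw [← integral_const_mul, ← integral_const_mul, ← integral_add
      (Continuous.intervalIntegrable (by fun_prop) _ _)
      (Continuous.intervalIntegrable (by fun_prop) _ _)]
    refine integral_congr fun s _ => ?_
    simp only [betaKernel]
    push_cast
    ring
  rw [integral_betaKernel_mul_sub_eq_zero, add_zero] at hsplit
  have : 0 < ((p + q + 3) * τ - (p + 1)) * ∫ s in 0..1, betaKernel p (q + 1) s := by
    rw [← hsplit]; positivity
  rw [div_lt_iff₀ (by positivity)]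
  linarith [pos_of_mul_pos_left this hB.le]

end BetaKernel

section Mode

variable {p q : ℕ} {m : ℝ}

theorem leftPart_betaKernel_at_mode (hm : (p + q + 2) * m = p + 1) :
    (p + q + 2) * leftPart (betaKernel p q) m
      = m * betaKernel (p + 1) (q + 1) m - ∫ s in 0..m, betaKernel (p + 1) (q + 1) s := by
  have h := integral_mul_deriv_eq_deriv_mul (a := 0) (b := m)
    (fun s _ => hasDerivAt_id' s) (fun s _ => hasDerivAt_betaKernel p q s)
    (Continuous.intervalIntegrable (by fun_prop) _ _)
    (Continuous.intervalIntegrable (by fun_prop) _ _)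
  simp only [one_mul, zero_mul, sub_zero] at h
  rw [← h, leftPart, ← integral_const_mul]
  exact integral_congr fun s _ => by linear_combination s * betaKernel p q s * hm

theorem rightPart_betaKernel_at_mode (hm : (p + q + 2) * m = p + 1) :
    (p + q + 2) * rightPart (betaKernel p q) m
      = (1 - m) * betaKernel (p + 1) (q + 1) m - ∫ s in m..1, betaKernel (p + 1) (q + 1) s := by
  have hm' : ((q : ℝ) + p + 2) * (1 - m) = q + 1 := by linear_combination -hm
  have hrefl : (fun s => betaKernel p q (1 - s)) = betaKernel q p :=
    funext (betaKernel_one_sub p q)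
  rw [rightPart_eq_leftPart_comp_one_sub, hrefl, show (p : ℝ) + q + 2 = q + p + 2 by ring,
    leftPart_betaKernel_at_mode hm', betaKernel_one_sub, integral_betaKernel_one_sub]

end Mode

theorem mul_log_add_one_sub_mul_log_lt {m z : ℝ} (hm0 : 0 < m) (hm : m < 1 / 2)
    (hz : z ∈ Ioo 0 1) :
    m * log (1 - (1 - m) * z) + (1 - m) * log ((1 - m) * z)
      < m * log (m * z) + (1 - m) * log (1 - m * z) := by
  set φ : ℝ → ℝ := fun y => m * log (m * y) + (1 - m) * log (1 - m * y)
    - m * log (1 - (1 - m) * y) - (1 - m) * log ((1 - m) * y)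
  have hderiv : ∀ y ∈ Ioc (0 : ℝ) 1,
      HasDerivAt φ ((2 * m - 1) * (1 - y) / (y * (1 - m * y) * (1 - (1 - m) * y))) y := by
    rintro y ⟨hy0, hy1⟩
    have h1 : 0 < 1 - m * y := by nlinarith
    have h2 : 0 < 1 - (1 - m) * y := by nlinarith
    have h3 : 0 < 1 - m := by linarith
    have d1 := ((hasDerivAt_id' y).const_mul m).log (by positivity)
    have d2 := (((hasDerivAt_id' y).const_mul m).const_sub 1).log h1.ne'
    have d3 := (((hasDerivAt_id' y).const_mul (1 - m)).const_sub 1).log h2.ne'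
    have d4 := ((hasDerivAt_id' y).const_mul (1 - m)).log (by positivity)
    refine ((((d1.const_mul m).add (d2.const_mul (1 - m))).sub (d3.const_mul m)).sub
      (d4.const_mul (1 - m))).congr_deriv ?_
    -- `field_simp` cancels these denominators only when they are atoms
    generalize hA : 1 - m * y = A at h1 ⊢
    generalize hB : 1 - (1 - m) * y = B at h2 ⊢
    field_simp
    rw [← hA, ← hB]
    ring
  have hanti : StrictAntiOn φ (Icc z 1) := by
    refine strictAntiOn_of_deriv_neg (convex_Icc z 1)
      (fun y hy => (hderiv y ⟨hz.1.trans_le hy.1, hy.2⟩).continuousAt.continuousWithinAt)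
      fun y hy => ?_
    rw [interior_Icc] at hy
    have hy0 : 0 < y := hz.1.trans hy.1
    rw [(hderiv y ⟨hy0, hy.2.le⟩).deriv]
    have h1 : 0 < 1 - m * y := by nlinarith [hy.2]
    have h2 : 0 < 1 - (1 - m) * y := by nlinarith [hy.2]
    exact div_neg_of_neg_of_pos (mul_neg_of_neg_of_pos (by linarith) (by linarith [hy.2]))
      (by positivity)
  have hφ1 : φ 1 = 0 := by simp only [φ]; ring_nf
  have := hanti ⟨le_rfl, hz.2.le⟩ ⟨hz.2.le, le_rfl⟩ hz.2
  simp only [φ] at this hφ1 ⊢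
  linarith

theorem log_betaKernel (p q : ℕ) {s : ℝ} (hs : s ∈ Ioo 0 1) :
    log (betaKernel p q s) = p * log s + q * log (1 - s) := by
  rw [betaKernel, log_mul (pow_pos hs.1 p).ne' (pow_pos (sub_pos.2 hs.2) q).ne', log_pow, log_pow]

theorem betaKernel_right_lt_left {p q : ℕ} (hpq : p < q) {m : ℝ} (hm : (p + q + 2) * m = p + 1)
    {w : ℝ} (hw : w ∈ Ioo 0 1) :
    betaKernel (p + 1) (q + 1) (1 - (1 - m) * w) < betaKernel (p + 1) (q + 1) (m * w) := by
  have hc : (0 : ℝ) < p + q + 2 := by positivity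
  have hpq' : (p : ℝ) < q := by exact_mod_cast hpq
  have hm0 : 0 < m := by nlinarith
  have hm1 : m < 1 / 2 := by nlinarith
  have hlog : ∀ s ∈ Ioo (0 : ℝ) 1, log (betaKernel (p + 1) (q + 1) s)
      = (p + q + 2) * (m * log s + (1 - m) * log (1 - s)) := fun s hs => by
    rw [log_betaKernel _ _ hs]
    push_cast
    linear_combination (log (1 - s) - log s) * hm
  have hw1 : 0 < (1 - m) * w := mul_pos (by linarith) hw.1
  have hw2 : (1 - m) * w < 1 := by nlinarith [hw.2]
  have hw3 : 0 < m * w := mul_pos hm0 hw.1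
  have hw4 : m * w < 1 := by nlinarith [hw.2]
  rw [← log_lt_log_iff (betaKernel_pos _ _ ⟨by linarith, by linarith⟩)
    (betaKernel_pos _ _ ⟨hw3, hw4⟩), hlog _ ⟨by linarith, by linarith⟩, hlog _ ⟨hw3, hw4⟩,
    sub_sub_cancel]
  exact mul_lt_mul_of_pos_left (mul_log_add_one_sub_mul_log_lt hm0 hm1 hw) hc

theorem balance_fails_at_mode {x k : ℕ} (hxk : x < k) {m : ℝ} (hm : (x + k + 2) * m = x + 1) :
    (1 - m) * leftPart (betaKernel x k) m < m * rightPart (betaKernel x k) m := by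
  have hc : (0 : ℝ) < x + k + 2 := by positivity
  have hm0 : 0 < m := by nlinarith
  have hm1 : m < 1 := by nlinarith
  have key := mul_integral_lt_of_rescaled_lt (continuous_betaKernel (x + 1) (k + 1)) ⟨hm0, hm1⟩
    fun w hw => betaKernel_right_lt_left hxk hm hw
  have hL := leftPart_betaKernel_at_mode hm
  have hR := rightPart_betaKernel_at_mode hm
  refine lt_of_mul_lt_mul_left ?_ hc.le
  linear_combination key + (1 - m) * hL - m * hR

theorem balance_of_In_eq {x k : ℕ} {τ : ℝ} (h : In (x + k) x τ = In (x + k) k (1 - τ)) :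
    (1 - τ) * leftPart (betaKernel x k) τ = τ * rightPart (betaKernel x k) τ := by
  rw [leftPart_betaKernel, rightPart_betaKernel, h]
  ring

section BalancePoint

variable {x k : ℕ} {τ : ℝ}

theorem div_lt_of_balance (hτ : τ ∈ Ioo 0 1)
    (hbal : (1 - τ) * leftPart (betaKernel x k) τ = τ * rightPart (betaKernel x k) τ) :
    ((x : ℝ) + 1) / ((x + k : ℕ) + 3) < τ := by
  have h := div_lt_of_integral_betaKernel_pos x k <| integral_pos_of_balance (continuous_betaKernel x k)
    (fun s hs => betaKernel_pos x k ⟨hs.1, hs.2.trans hτ.2⟩) hτ.1 hbal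
  rwa [Nat.cast_add]

theorem div_lt_of_balance_of_lt (hτ : τ ∈ Ioo 0 1)
    (hbal : (1 - τ) * leftPart (betaKernel x k) τ = τ * rightPart (betaKernel x k) τ)
    (hxk : x < k) : ((x : ℝ) + 1) / ((x + k : ℕ) + 2) < τ := by
  have hc : (0 : ℝ) < (x + k : ℕ) + 2 := by positivity
  refine lt_of_balance (continuous_betaKernel x k) (fun s hs => betaKernel_nonneg x k hs)
    ⟨by positivity, (div_lt_one hc).2 (by push_cast; linarith)⟩ hτ hbal
    (balance_fails_at_mode hxk ?_)
  push_cast at hc ⊢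
  field_simp

end BalancePoint

theorem lt_div_of_div_lt_one_sub {a b c τ : ℝ} (hc : 0 < c) (habc : a + b = c)
    (h : a / c < 1 - τ) : τ < b / c := by
  rw [div_lt_iff₀ hc] at h
  rw [lt_div_iff₀ hc]
  linarith

/-- Part (2) of Theorem 3: bounds for the iterative Bayes estimate `τ = p̂_IB(x)`. -/
theorem In_fixed_point_bounds (n x : ℕ) (hx : x ≤ n)
    (τ : ℝ) (hτ : τ ∈ Set.Ioo (0 : ℝ) 1)
    (heq : In n x τ = In n (n - x) (1 - τ)) :
    (((x : ℝ) + 1) / ((n : ℝ) + 3) < τ ∧ τ < ((x : ℝ) + 2) / ((n : ℝ) + 3)) ∧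
    (2 * x < n → ((x : ℝ) + 1) / ((n : ℝ) + 2) < τ ∧ τ < ((x : ℝ) + 2) / ((n : ℝ) + 3)) ∧
    (2 * x > n → ((x : ℝ) + 1) / ((n : ℝ) + 3) < τ ∧ τ < ((x : ℝ) + 1) / ((n : ℝ) + 2)) := by
  obtain ⟨k, rfl⟩ : ∃ k, n = x + k := ⟨n - x, by omega⟩
  rw [Nat.add_sub_cancel_left] at heq
  have hbal := balance_of_In_eq heq
  have hbal' := balance_of_In_eq (x := k) (k := x) (τ := 1 - τ) <| by
    rw [add_comm k x, sub_sub_cancel, heq]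
  have hτ' : 1 - τ ∈ Ioo (0 : ℝ) 1 := ⟨by linarith [hτ.2], by linarith [hτ.1]⟩
  have hlower := div_lt_of_balance hτ hbal
  have hupper : τ < ((x : ℝ) + 2) / ((x + k : ℕ) + 3) :=
    lt_div_of_div_lt_one_sub (by positivity) (by push_cast; ring)
      (add_comm k x ▸ div_lt_of_balance hτ' hbal')
  refine ⟨⟨hlower, hupper⟩, fun h => ⟨div_lt_of_balance_of_lt hτ hbal (by omega), hupper⟩,
    fun h => ⟨hlower, ?_⟩⟩
  exact lt_div_of_div_lt_one_sub (by positivity) (by push_cast; ring)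
    (add_comm k x ▸ div_lt_of_balance_of_lt hτ' hbal' (by omega))
end
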